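/- arXiv:1403.7417 — 3 statements merged into one kernel-verified Lean document; each statement's English description precedes it below -/
import Mathlib

section
/- Let |·| be a function on a field k satisfying |x| = 0 iff x = 0, |xy| = |x||y|, and |x + y| ≤ 2·max(|x|, |y|) for all x, y ∈ k. Then |·| satisfies the triangle inequality |x + y| ≤ |x| + |y|, i.e., it is an absolute value function. -/
/-!
Iterating the quasi-triangle inequality bounds a sum of `n` terms of size at most `B` by `2 n B`;
in particular `|n| ≤ 2 n`. Applied to the binomial expansion of `(x + y) ^ n` this gives
`|x + y| ^ n ≤ 4 (n + 1) (|x| + |y|) ^ n`, and since `4 (n + 1)` grows subexponentially, taking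
`n`-th roots as `n → ∞` yields `|x + y| ≤ |x| + |y|` (Artin's argument).
-/

open Finset Filter Topology

section QuasiTriangle

variable {M : Type*} [AddCommMonoid M] {f : M → ℝ}

theorem map_sum_le_two_pow_mul (h_zero : f 0 = 0)
    (h_quasi : ∀ x y, f (x + y) ≤ 2 * max (f x) (f y)) {ι : Type*}
    {a : ι → M} {B : ℝ} (hB : 0 ≤ B) (m : ℕ) {s : Finset ι} (hs : #s ≤ 2 ^ m)
    (ha : ∀ i ∈ s, f (a i) ≤ B) : f (∑ i ∈ s, a i) ≤ 2 ^ m * B := by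
  classical
  induction m generalizing s with
  | zero =>
    rcases Nat.le_one_iff_eq_zero_or_eq_one.mp (by simpa using hs) with h | h
    · simp [card_eq_zero.mp h, h_zero, hB]
    · obtain ⟨i, rfl⟩ := card_eq_one.mp h
      simpa using ha i (mem_singleton_self i)
  | succ m ih =>
    obtain ⟨t, hts, ht⟩ := exists_subset_card_eq (min_le_right (2 ^ m) #s)
    have h_rest : #(s \ t) ≤ 2 ^ m := by
      rw [card_sdiff_of_subset hts, ht]
      rw [pow_succ] at hs
      omega
    rw [← sum_sdiff hts]
    calc f (∑ i ∈ s \ t, a i + ∑ i ∈ t, a i)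
        ≤ 2 * max (f (∑ i ∈ s \ t, a i)) (f (∑ i ∈ t, a i)) := h_quasi _ _
      _ ≤ 2 * (2 ^ m * B) := by
        gcongr
        exact max_le (ih h_rest fun i hi ↦ ha i (sdiff_subset hi))
          (ih (ht ▸ min_le_left _ _) fun i hi ↦ ha i (hts hi))
      _ = 2 ^ (m + 1) * B := by ring

theorem map_sum_le_two_mul_card_mul (h_zero : f 0 = 0)
    (h_quasi : ∀ x y, f (x + y) ≤ 2 * max (f x) (f y)) {ι : Type*}
    {a : ι → M} {B : ℝ} (hB : 0 ≤ B) (s : Finset ι) (ha : ∀ i ∈ s, f (a i) ≤ B) :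
    f (∑ i ∈ s, a i) ≤ 2 * #s * B := by
  rcases s.eq_empty_or_nonempty with rfl | hs
  · simp [h_zero]
  have hcard : #s ≠ 0 := hs.card_pos.ne'
  calc f (∑ i ∈ s, a i) ≤ 2 ^ (Nat.log 2 #s + 1) * B :=
        map_sum_le_two_pow_mul h_zero h_quasi hB _ (Nat.lt_pow_succ_log_self one_lt_two _).le ha
    _ ≤ 2 * #s * B := by
        rw [pow_succ']
        gcongr
        exact_mod_cast Nat.pow_log_le_self 2 hcard

end QuasiTriangle

theorem pow_mul_pow_mul_choose_le_add_pow {R : Type*} [CommSemiring R] [PartialOrder R]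
    [IsOrderedRing R] {a b : R} (ha : 0 ≤ a) (hb : 0 ≤ b) {n i : ℕ} (hi : i ≤ n) :
    a ^ i * b ^ (n - i) * n.choose i ≤ (a + b) ^ n := by
  rw [add_pow]
  exact single_le_sum (f := fun j ↦ a ^ j * b ^ (n - j) * n.choose j)
    (fun j _ ↦ by positivity) (mem_range_succ_iff.mpr hi)

theorem le_of_forall_pow_le_mul_succ_mul_pow {a b C : ℝ} (hb : 0 ≤ b)
    (h : ∀ n : ℕ, a ^ n ≤ C * (n + 1) * b ^ n) : a ≤ b := by
  by_contra! hba
  have ha : 0 < a := hb.trans_lt hba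
  set r := b / a
  have hr : r < 1 := (div_lt_one ha).mpr hba
  have h_lim : Tendsto (fun n : ℕ ↦ C * (n * r ^ n + r ^ n)) atTop (𝓝 (C * (0 + 0))) :=
    ((tendsto_self_mul_const_pow_of_lt_one (by positivity) hr).add
      (tendsto_pow_atTop_nhds_zero_of_lt_one (by positivity) hr)).const_mul C
  obtain ⟨n, hn⟩ := (h_lim.eventually (gt_mem_nhds (show C * (0 + 0) < 1 by simp))).exists
  have h_rescaled : C * (n + 1) * b ^ n = C * (n * r ^ n + r ^ n) * a ^ n := by
    simp only [r, div_pow]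
    field_simp
  have h_lt := (mul_lt_iff_lt_one_left (pow_pos ha n)).mpr hn
  linarith [h n]

section QuasiAbsoluteValue

variable {R : Type*} [CommSemiring R] (φ : R →*₀ ℝ)
    (h_quasi : ∀ x y, φ (x + y) ≤ 2 * max (φ x) (φ y))
include h_quasi

theorem map_natCast_le_two_mul (n : ℕ) : φ n ≤ 2 * n := by
  simpa using map_sum_le_two_mul_card_mul φ.map_zero h_quasi zero_le_one (range n)
    (a := fun _ ↦ (1 : R)) (by simp)

theorem map_add_pow_le (h_nonneg : ∀ x, 0 ≤ φ x) (x y : R) (n : ℕ) :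
    φ (x + y) ^ n ≤ 4 * (n + 1) * (φ x + φ y) ^ n := by
  have h_term : ∀ i ∈ range (n + 1),
      φ (x ^ i * y ^ (n - i) * n.choose i) ≤ 2 * (φ x + φ y) ^ n := by
    intro i hi
    rw [map_mul, map_mul, map_pow, map_pow]
    calc φ x ^ i * φ y ^ (n - i) * φ (n.choose i)
        ≤ φ x ^ i * φ y ^ (n - i) * (2 * n.choose i) := by
          gcongr
          · exact mul_nonneg (pow_nonneg (h_nonneg x) _) (pow_nonneg (h_nonneg y) _)
          · exact map_natCast_le_two_mul φ h_quasi _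
      _ = 2 * (φ x ^ i * φ y ^ (n - i) * n.choose i) := by ring
      _ ≤ 2 * (φ x + φ y) ^ n := by
          gcongr
          exact pow_mul_pow_mul_choose_le_add_pow (h_nonneg x) (h_nonneg y)
            (mem_range_succ_iff.mp hi)
  calc φ (x + y) ^ n = φ (∑ i ∈ range (n + 1), x ^ i * y ^ (n - i) * n.choose i) := by
        rw [← map_pow, add_pow]
    _ ≤ 2 * #(range (n + 1)) * (2 * (φ x + φ y) ^ n) :=
        map_sum_le_two_mul_card_mul φ.map_zero h_quasi
          (mul_nonneg zero_le_two (pow_nonneg (add_nonneg (h_nonneg x) (h_nonneg y)) n)) _ h_term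
    _ = 4 * (n + 1) * (φ x + φ y) ^ n := by push_cast [card_range]; ring

theorem map_add_le_add (h_nonneg : ∀ x, 0 ≤ φ x) (x y : R) : φ (x + y) ≤ φ x + φ y :=
  le_of_forall_pow_le_mul_succ_mul_pow (add_nonneg (h_nonneg x) (h_nonneg y))
    (map_add_pow_le φ h_quasi h_nonneg x y)

end QuasiAbsoluteValue

/-- If `|·|` on a field `k` is positive definite, multiplicative, and satisfies
`|x + y| ≤ 2 · max(|x|, |y|)`, then it satisfies the triangle inequality. -/
theorem stmt_7 {k : Type*} [Field k] (f : k → ℝ)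
    (h_nonneg : ∀ x, 0 ≤ f x)
    (h_eq : ∀ x, f x = 0 ↔ x = 0)
    (h_mul : ∀ x y, f (x * y) = f x * f y)
    (h_quasi : ∀ x y : k, f (x + y) ≤ 2 * max (f x) (f y)) :
    ∀ x y : k, f (x + y) ≤ f x + f y := by
  have h_one : f 1 = 1 := by
    have h := h_mul 1 1
    rw [one_mul] at h
    exact (mul_right_eq_self₀.mp h.symm).resolve_right ((h_eq 1).not.mpr one_ne_zero)
  let φ : k →*₀ ℝ :=
    { toFun := f, map_zero' := (h_eq 0).mpr rfl, map_one' := h_one, map_mul' := h_mul }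
  exact map_add_le_add φ h_quasi h_nonneg
end

section
/- Let K be a complete nonarchimedean normed field, r > 0, and (a_j) a sequence in K with |a_j| r^j → 0. Let f(x) = ∑_{j≥0} a_j x^j and f'(x) = ∑_{j≥1} j·a_j x^{j−1} for |x| ≤ r. Then for all x, y with |x|, |y| ≤ r: |f(x) − f(y) − f'(y)(x − y)| ≤ (sup_{j≥2} |a_j| r^{j−2}) · |x − y|². Moreover, if (sup_{j≥2} |a_j| r^{j−2})·|x − y| < |f'(y)|, then |f(x) − f(y)| = |f'(y)|·|x − y|. -/
open Filter

private lemma alg_key {K : Type*} [Field K] (x y c : K) (j : ℕ) :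
    c * x ^ j - c * y ^ j - c * (j : K) * y ^ (j - 1) * (x - y) =
      (x - y) ^ 2 *
        (c * ∑ i ∈ Finset.range j,
          (∑ k ∈ Finset.range i, x ^ k * y ^ (i - 1 - k)) * y ^ (j - 1 - i)) := by
  have h2 : ((j : K)) * y ^ (j - 1) = ∑ i ∈ Finset.range j, y ^ i * y ^ (j - 1 - i) := by
    rw [Finset.sum_congr rfl (g := fun _ => y ^ (j - 1)) fun i hi => ?_]
    · rw [Finset.sum_const, Finset.card_range, nsmul_eq_mul]
    · rw [← pow_add]
      congr 1
      have := Finset.mem_range.mp hi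
      omega
  have h1 : x ^ j - y ^ j = (∑ i ∈ Finset.range j, x ^ i * y ^ (j - 1 - i)) * (x - y) :=
    (geom_sum₂_mul x y j).symm
  calc c * x ^ j - c * y ^ j - c * (j : K) * y ^ (j - 1) * (x - y)
      = c * ((x ^ j - y ^ j) - ((j : K) * y ^ (j - 1)) * (x - y)) := by ring
    _ = c * ((∑ i ∈ Finset.range j, (x ^ i - y ^ i) * y ^ (j - 1 - i)) * (x - y)) := by
        rw [h1, h2, Finset.sum_mul, Finset.sum_mul, Finset.sum_mul, ← Finset.sum_sub_distrib]
        congr 1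
        apply Finset.sum_congr rfl
        intro i _
        ring
    _ = c * ((∑ i ∈ Finset.range j,
          ((∑ k ∈ Finset.range i, x ^ k * y ^ (i - 1 - k)) * y ^ (j - 1 - i)) * (x - y)) *
          (x - y)) := by
        congr 2
        apply Finset.sum_congr rfl
        intro i _
        rw [← geom_sum₂_mul x y i]
        ring
    _ = _ := by rw [← Finset.sum_mul]; ring

/-- Differentiability-type estimate for power series over a complete
nonarchimedean field: with `f(x) = ∑ a_j x^j`, `f'(x) = ∑ j·a_j x^{j-1}`, and
`‖a_j‖ r^j → 0`, for `‖x‖, ‖y‖ ≤ r` we have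
`‖f(x) - f(y) - f'(y)(x - y)‖ ≤ (sup_{j ≥ 2} ‖a_j‖ r^{j-2}) ‖x - y‖²`; and if
`(sup_{j ≥ 2} ‖a_j‖ r^{j-2}) ‖x - y‖ < ‖f'(y)‖`, then
`‖f(x) - f(y)‖ = ‖f'(y)‖ ‖x - y‖`. -/
theorem stmt_18 {K : Type*} [NormedField K] [CompleteSpace K]
    (h_na : ∀ x y : K, ‖x + y‖ ≤ max ‖x‖ ‖y‖)
    (r : ℝ) (hr : 0 < r) (a : ℕ → K)
    (h_decay : Tendsto (fun j => ‖a j‖ * r ^ j) atTop (nhds 0))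
    (f f' : K → K)
    (hf : ∀ x : K, ‖x‖ ≤ r → f x = ∑' j : ℕ, a j * x ^ j)
    (hf' : ∀ x : K, ‖x‖ ≤ r →
      f' x = ∑' j : ℕ, (((j + 1 : ℕ) : K) * a (j + 1)) * x ^ j) :
    ∀ x y : K, ‖x‖ ≤ r → ‖y‖ ≤ r →
      (‖f x - f y - f' y * (x - y)‖ ≤
        (⨆ j : ℕ, ‖a (j + 2)‖ * r ^ j) * ‖x - y‖ ^ 2) ∧
      ((⨆ j : ℕ, ‖a (j + 2)‖ * r ^ j) * ‖x - y‖ < ‖f' y‖ →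
        ‖f x - f y‖ = ‖f' y‖ * ‖x - y‖) := by
  haveI inst : IsUltrametricDist K :=
    IsUltrametricDist.isUltrametricDist_of_forall_norm_add_le_max_norm h_na
  intro x y hx hy
  set C : ℝ := ⨆ j : ℕ, ‖a (j + 2)‖ * r ^ j with hCdef
  have hdecay2 : Tendsto (fun j : ℕ => ‖a (j + 2)‖ * r ^ j) atTop (nhds 0) := by
    have h1 : Tendsto (fun j : ℕ => ‖a (j + 2)‖ * r ^ (j + 2)) atTop (nhds 0) :=
      h_decay.comp (tendsto_add_atTop_nat 2)
    have h2 : Tendsto (fun j : ℕ => ‖a (j + 2)‖ * r ^ (j + 2) * (r ^ 2)⁻¹) atTop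
        (nhds (0 * (r ^ 2)⁻¹)) := h1.mul_const _
    rw [zero_mul] at h2
    refine h2.congr fun j => ?_
    have hrn : (r : ℝ) ^ 2 ≠ 0 := pow_ne_zero 2 hr.ne'
    field_simp
    ring
  have hbdd : BddAbove (Set.range fun j : ℕ => ‖a (j + 2)‖ * r ^ j) := hdecay2.bddAbove_range
  have hCle : ∀ j : ℕ, ‖a (j + 2)‖ * r ^ j ≤ C := fun j => le_ciSup hbdd j
  have hC0 : (0 : ℝ) ≤ C := le_trans (by positivity) (hCle 0)
  set t : ℕ → K := fun j => a j * ∑ i ∈ Finset.range j,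
      (∑ k ∈ Finset.range i, x ^ k * y ^ (i - 1 - k)) * y ^ (j - 1 - i) with ht
  set d : ℕ → K := fun j => a j * (j : K) * y ^ (j - 1) * (x - y) with hd
  -- summability helper
  have summable_of_norm : ∀ (g : ℕ → K) (b : ℕ → ℝ), (∀ j, ‖g j‖ ≤ b j) →
      Tendsto b atTop (nhds 0) → Summable g := by
    intro g b hb htend
    apply NonarchimedeanAddGroup.summable_of_tendsto_cofinite_zero
    rw [Nat.cofinite_eq_atTop]
    exact squeeze_zero_norm hb htend
  have hpow : ∀ (z : K), ‖z‖ ≤ r → ∀ n : ℕ, ‖z‖ ^ n ≤ r ^ n := fun z hz n =>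
    pow_le_pow_left₀ (norm_nonneg z) hz n
  have hSx : Summable fun j => a j * x ^ j := by
    refine summable_of_norm _ (fun j => ‖a j‖ * r ^ j) (fun j => ?_) h_decay
    rw [norm_mul, norm_pow]
    exact mul_le_mul_of_nonneg_left (hpow x hx j) (norm_nonneg _)
  have hSy : Summable fun j => a j * y ^ j := by
    refine summable_of_norm _ (fun j => ‖a j‖ * r ^ j) (fun j => ?_) h_decay
    rw [norm_mul, norm_pow]
    exact mul_le_mul_of_nonneg_left (hpow y hy j) (norm_nonneg _)
  have hSd : Summable d := by
    refine summable_of_norm _ (fun j => ‖a j‖ * r ^ j * (r⁻¹ * ‖x - y‖)) (fun j => ?_) ?_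
    · match j with
      | 0 =>
        have h0 : d 0 = 0 := by simp [hd]
        rw [h0, norm_zero]
        positivity
      | (m + 1) =>
        have : ‖d (m + 1)‖ ≤ ‖a (m + 1)‖ * 1 * r ^ m * ‖x - y‖ := by
          simp only [hd]
          rw [norm_mul, norm_mul, norm_mul, norm_pow]
          have h1 : ‖((m + 1 : ℕ) : K)‖ ≤ 1 := IsUltrametricDist.norm_natCast_le_one K (m + 1)
          have h2 : ‖y‖ ^ (m + 1 - 1) ≤ r ^ m := by
            simpa using hpow y hy m
          gcongr <;> first | exact norm_nonneg _ | skip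
        refine this.trans (le_of_eq ?_)
        show ‖a (m + 1)‖ * 1 * r ^ m * ‖x - y‖ = ‖a (m + 1)‖ * r ^ (m + 1) * (r⁻¹ * ‖x - y‖)
        rw [pow_succ]
        field_simp
    · have := h_decay.mul_const (r⁻¹ * ‖x - y‖)
      rwa [zero_mul] at this
  -- bound on t
  have htC : ∀ j : ℕ, ‖t j‖ ≤ C := by
    intro j
    match j with
    | 0 => simp only [ht]; simpa using hC0
    | 1 => simp only [ht]; simpa using hC0
    | (m + 2) =>
      have hsum : ‖∑ i ∈ Finset.range (m + 2),
          (∑ k ∈ Finset.range i, x ^ k * y ^ (i - 1 - k)) * y ^ (m + 2 - 1 - i)‖ ≤ r ^ m := by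
        apply IsUltrametricDist.norm_sum_le_of_forall_le_of_nonneg (by positivity)
        intro i hi
        rcases Nat.eq_zero_or_pos i with rfl | hipos
        · simp only [Finset.range_zero, Finset.sum_empty, zero_mul, norm_zero]
          positivity
        have hinner : ‖∑ k ∈ Finset.range i, x ^ k * y ^ (i - 1 - k)‖ ≤ r ^ (i - 1) := by
          apply IsUltrametricDist.norm_sum_le_of_forall_le_of_nonneg (by positivity)
          intro k hk
          rw [norm_mul, norm_pow, norm_pow]
          calc ‖x‖ ^ k * ‖y‖ ^ (i - 1 - k) ≤ r ^ k * r ^ (i - 1 - k) :=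
                mul_le_mul (hpow x hx k) (hpow y hy _) (by positivity) (by positivity)
            _ = r ^ (i - 1) := by
                rw [← pow_add]
                congr 1
                have := Finset.mem_range.mp hk
                omega
        rw [norm_mul, norm_pow]
        calc ‖∑ k ∈ Finset.range i, x ^ k * y ^ (i - 1 - k)‖ * ‖y‖ ^ (m + 2 - 1 - i)
            ≤ r ^ (i - 1) * r ^ (m + 2 - 1 - i) :=
              mul_le_mul hinner (hpow y hy _) (by positivity) (by positivity)
          _ = r ^ m := by
              rw [← pow_add]
              congr 1
              have := Finset.mem_range.mp hi
              omega
      calc ‖t (m + 2)‖ = ‖a (m + 2)‖ * ‖∑ i ∈ Finset.range (m + 2),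
            (∑ k ∈ Finset.range i, x ^ k * y ^ (i - 1 - k)) * y ^ (m + 2 - 1 - i)‖ := by
            simp only [ht]; rw [norm_mul]
        _ ≤ ‖a (m + 2)‖ * r ^ m := mul_le_mul_of_nonneg_left hsum (norm_nonneg _)
        _ ≤ C := hCle m
  -- main identity
  have hshift : ∑' j : ℕ, (((j + 1 : ℕ) : K) * a (j + 1)) * y ^ j * (x - y) = ∑' j, d j := by
    rw [Summable.tsum_eq_zero_add hSd]
    have hd0 : d 0 = 0 := by simp [hd]
    rw [hd0, zero_add]
    apply tsum_congr
    intro j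
    simp only [hd, Nat.add_sub_cancel]
    push_cast
    ring
  have hmain : f x - f y - f' y * (x - y) = (x - y) ^ 2 * ∑' j, t j := by
    rw [hf x hx, hf y hy, hf' y hy, ← tsum_mul_right, hshift,
      ← Summable.tsum_sub hSx hSy, ← Summable.tsum_sub (hSx.sub hSy) hSd, ← tsum_mul_left]
    apply tsum_congr
    intro j
    simp only [hd, ht]
    exact alg_key x y (a j) j
  have hnorm1 : ‖f x - f y - f' y * (x - y)‖ ≤ C * ‖x - y‖ ^ 2 := by
    rw [hmain, norm_mul, norm_pow, mul_comm]
    exact mul_le_mul_of_nonneg_right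
      (IsUltrametricDist.norm_tsum_le_of_forall_le_of_nonneg hC0 htC) (by positivity)
  refine ⟨hnorm1, fun hlt => ?_⟩
  rcases eq_or_ne x y with rfl | hxy
  · simp
  have hxy0 : (0 : ℝ) < ‖x - y‖ := norm_pos_iff.mpr (sub_ne_zero.mpr hxy)
  have hR : ‖f x - f y - f' y * (x - y)‖ < ‖f' y * (x - y)‖ := by
    rw [norm_mul]
    calc ‖f x - f y - f' y * (x - y)‖ ≤ C * ‖x - y‖ ^ 2 := hnorm1
      _ = (C * ‖x - y‖) * ‖x - y‖ := by ring
      _ < ‖f' y‖ * ‖x - y‖ := mul_lt_mul_of_pos_right hlt hxy0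
  have hrw : f x - f y = (f x - f y - f' y * (x - y)) + f' y * (x - y) := by ring
  rw [hrw, IsUltrametricDist.norm_add_eq_max_of_norm_ne_norm (ne_of_lt hR),
    max_eq_right hR.le, norm_mul]
end

section
/- (Strassmann's theorem) Let K be a complete nonarchimedean normed field, r > 0, and (a_j) a sequence in K, not all zero, with |a_j| r^j → 0. Let N be a nonnegative integer such that |a_j| r^j < |a_N| r^N for every j > N. Then the function f(x) = ∑_{j≥0} a_j x^j has at most N zeros in the closed ball {x ∈ K : |x| ≤ r}. -/
/-!
Induction on `N`. If `x₀` is a zero of `f` with `‖x₀‖ ≤ r`, then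
`f(x) = (x - x₀) g(x)` on the ball, where `g(x) = ∑ b_k x^k` and `b_k = ∑_i a_{k+1+i} x₀^i`.
By the ultrametric inequality `‖b_k‖ r^(k+1) ≤ sup_{j > k} ‖a_j‖ r^j`, and the strict dominance
of `a_N` forces `‖b_{N-1}‖ = ‖a_N‖`, so `g` satisfies the hypothesis with `N - 1`. For `N = 0`
the same computation gives `‖a_0‖ = ‖f(x₀)‖ = 0`, which is impossible.
-/

open Filter Topology IsUltrametricDist

namespace Strassmann

lemma exists_lt_forall_le_of_tendsto_zero {c : ℕ → ℝ} {B : ℝ} (hB : 0 < B)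
    (hc : Tendsto c atTop (𝓝 0)) {n : ℕ} (h : ∀ j, n < j → c j < B) :
    ∃ C < B, ∀ j, n < j → c j ≤ C := by
  obtain ⟨M, hM⟩ := eventually_atTop.1 ((tendsto_order.1 hc).2 (B / 2) (half_pos hB))
  obtain ⟨j₀, hj₀, hmax⟩ := (Finset.Ioc n (n + M + 1)).exists_max_image c ⟨n + 1, by simp⟩
  refine ⟨max (B / 2) (c j₀), max_lt (half_lt_self hB) (h j₀ (Finset.mem_Ioc.1 hj₀).1),
    fun j hj => ?_⟩
  rcases le_or_gt j (n + M + 1) with hjM | hjM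
  · exact (hmax j (Finset.mem_Ioc.2 ⟨hj, hjM⟩)).trans (le_max_right _ _)
  · exact (hM j (by omega)).le.trans (le_max_left _ _)

variable {K : Type*} [NormedField K] {r : ℝ} {a : ℕ → K} {x₀ : K}

lemma tendsto_norm_shift_mul_pow (hr : 0 < r)
    (ha : Tendsto (fun j => ‖a j‖ * r ^ j) atTop (𝓝 0)) (k : ℕ) :
    Tendsto (fun i => ‖a (i + k)‖ * r ^ i) atTop (𝓝 0) := by
  have := ((tendsto_add_atTop_iff_nat k).2 ha).div_const (r ^ k)
  rw [zero_div] at this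
  refine this.congr fun i => ?_
  rw [pow_add, ← mul_assoc, mul_div_cancel_right₀ _ (by positivity)]

lemma summable_mul_pow [IsUltrametricDist K] [CompleteSpace K]
    (ha : Tendsto (fun j => ‖a j‖ * r ^ j) atTop (𝓝 0)) {x : K} (hx : ‖x‖ ≤ r) :
    Summable fun j => a j * x ^ j := by
  refine NonarchimedeanAddGroup.summable_of_tendsto_cofinite_zero ?_
  rw [Nat.cofinite_eq_atTop]
  refine squeeze_zero_norm (fun j => ?_) ha
  rw [norm_mul, norm_pow]
  gcongr

noncomputable def tailSum (a : ℕ → K) (x₀ : K) (k : ℕ) : K := ∑' i, a (i + k) * x₀ ^ i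

lemma tailSum_zero : tailSum a x₀ 0 = ∑' j, a j * x₀ ^ j := by
  simp [tailSum]

lemma tailSum_eq_add [IsUltrametricDist K] [CompleteSpace K] (hr : 0 < r)
    (ha : Tendsto (fun j => ‖a j‖ * r ^ j) atTop (𝓝 0)) (hx₀ : ‖x₀‖ ≤ r) (k : ℕ) :
    tailSum a x₀ k = a k + x₀ * tailSum a x₀ (k + 1) := by
  rw [tailSum, (summable_mul_pow (tendsto_norm_shift_mul_pow hr ha k) hx₀).tsum_eq_zero_add,
    tailSum, ← tsum_mul_left]
  congr 1
  · simp
  · exact tsum_congr fun i => by rw [show i + 1 + k = i + (k + 1) by omega, pow_succ]; ring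

lemma norm_tailSum_mul_pow_le [IsUltrametricDist K] (hr : 0 < r) (hx₀ : ‖x₀‖ ≤ r) {k : ℕ}
    {C : ℝ} (hC : ∀ j, k ≤ j → ‖a j‖ * r ^ j ≤ C) : ‖tailSum a x₀ k‖ * r ^ k ≤ C := by
  have hrk : 0 < r ^ k := pow_pos hr k
  have hC₀ : 0 ≤ C := (by positivity : 0 ≤ ‖a k‖ * r ^ k).trans (hC k le_rfl)
  rw [← le_div_iff₀ hrk]
  refine norm_tsum_le_of_forall_le_of_nonneg (by positivity) fun i => ?_
  rw [le_div_iff₀ hrk, norm_mul, norm_pow]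
  calc ‖a (i + k)‖ * ‖x₀‖ ^ i * r ^ k ≤ ‖a (i + k)‖ * r ^ i * r ^ k := by gcongr
    _ = ‖a (i + k)‖ * r ^ (i + k) := by ring
    _ ≤ C := hC _ (by omega)

lemma tendsto_norm_tailSum_mul_pow [IsUltrametricDist K] (hr : 0 < r)
    (ha : Tendsto (fun j => ‖a j‖ * r ^ j) atTop (𝓝 0)) (hx₀ : ‖x₀‖ ≤ r) :
    Tendsto (fun k => ‖tailSum a x₀ k‖ * r ^ k) atTop (𝓝 0) := by
  refine tendsto_order.2 ⟨fun ε hε => .of_forall fun k => hε.trans_le (by positivity),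
    fun ε hε => ?_⟩
  obtain ⟨M, hM⟩ := eventually_atTop.1 ((tendsto_order.1 ha).2 (ε / 2) (half_pos hε))
  exact eventually_atTop.2 ⟨M, fun k hk => (norm_tailSum_mul_pow_le hr hx₀
    fun j hj => (hM j (hk.trans hj)).le).trans_lt (half_lt_self hε)⟩

theorem tsum_mul_pow_eq_add_sub_mul [IsUltrametricDist K] [CompleteSpace K] (hr : 0 < r)
    (ha : Tendsto (fun j => ‖a j‖ * r ^ j) atTop (𝓝 0)) {x : K} (hx : ‖x‖ ≤ r)
    (hx₀ : ‖x₀‖ ≤ r) :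
    ∑' j, a j * x ^ j =
      ∑' j, a j * x₀ ^ j + (x - x₀) * ∑' k, tailSum a x₀ (k + 1) * x ^ k := by
  have hT := tendsto_norm_tailSum_mul_pow hr ha hx₀
  have hsum := summable_mul_pow hT hx
  have hsum' := summable_mul_pow (tendsto_norm_shift_mul_pow hr hT 1) hx
  calc ∑' j, a j * x ^ j
      = ∑' j, (tailSum a x₀ j * x ^ j - x₀ * (tailSum a x₀ (j + 1) * x ^ j)) :=
        tsum_congr fun j => by rw [tailSum_eq_add hr ha hx₀ j]; ring
    _ = ∑' j, tailSum a x₀ j * x ^ j - x₀ * ∑' k, tailSum a x₀ (k + 1) * x ^ k := by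
        rw [hsum.tsum_sub (hsum'.mul_left x₀), tsum_mul_left]
    _ = tailSum a x₀ 0 + x * ∑' k, tailSum a x₀ (k + 1) * x ^ k
          - x₀ * ∑' k, tailSum a x₀ (k + 1) * x ^ k := by
        rw [hsum.tsum_eq_zero_add, pow_zero, mul_one, ← tsum_mul_left (a := x)]
        exact congrArg₂ _ (congrArg _ (tsum_congr fun k => by ring)) rfl
    _ = _ := by rw [tailSum_zero]; ring

lemma exists_lt_forall_le_of_dominant (hr : 0 ≤ r)
    (ha : Tendsto (fun j => ‖a j‖ * r ^ j) atTop (𝓝 0)) {N : ℕ}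
    (hN : ∀ j, N < j → ‖a j‖ * r ^ j < ‖a N‖ * r ^ N) :
    ∃ C < ‖a N‖ * r ^ N, ∀ j, N < j → ‖a j‖ * r ^ j ≤ C :=
  exists_lt_forall_le_of_tendsto_zero
    ((mul_nonneg (norm_nonneg _) (pow_nonneg hr _)).trans_lt (hN _ N.lt_succ_self)) ha hN

lemma norm_tailSum_eq_of_dominant [IsUltrametricDist K] [CompleteSpace K] (hr : 0 < r)
    (ha : Tendsto (fun j => ‖a j‖ * r ^ j) atTop (𝓝 0)) (hx₀ : ‖x₀‖ ≤ r) {N : ℕ} {C : ℝ}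
    (hC : C < ‖a N‖ * r ^ N) (hle : ∀ j, N < j → ‖a j‖ * r ^ j ≤ C) :
    ‖tailSum a x₀ N‖ = ‖a N‖ := by
  have hsmall : ‖x₀ * tailSum a x₀ (N + 1)‖ < ‖a N‖ := by
    refine lt_of_mul_lt_mul_right ?_ (pow_nonneg hr.le N)
    calc ‖x₀ * tailSum a x₀ (N + 1)‖ * r ^ N = ‖x₀‖ * (‖tailSum a x₀ (N + 1)‖ * r ^ N) := by
          rw [norm_mul, mul_assoc]
      _ ≤ r * (‖tailSum a x₀ (N + 1)‖ * r ^ N) := by gcongr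
      _ = ‖tailSum a x₀ (N + 1)‖ * r ^ (N + 1) := by ring
      _ ≤ C := norm_tailSum_mul_pow_le hr hx₀ hle
      _ < ‖a N‖ * r ^ N := hC
  rw [tailSum_eq_add hr ha hx₀, norm_add_eq_max_of_norm_ne_norm hsmall.ne', max_eq_left hsmall.le]

theorem norm_tailSum_succ_mul_pow_lt [IsUltrametricDist K] [CompleteSpace K] (hr : 0 < r)
    (ha : Tendsto (fun j => ‖a j‖ * r ^ j) atTop (𝓝 0)) (hx₀ : ‖x₀‖ ≤ r) {N : ℕ}
    (hN : ∀ j, N + 1 < j → ‖a j‖ * r ^ j < ‖a (N + 1)‖ * r ^ (N + 1)) (k : ℕ) (hk : N < k) :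
    ‖tailSum a x₀ (k + 1)‖ * r ^ k < ‖tailSum a x₀ (N + 1)‖ * r ^ N := by
  obtain ⟨C, hC, hle⟩ := exists_lt_forall_le_of_dominant hr.le ha hN
  refine lt_of_mul_lt_mul_right ?_ hr.le
  calc ‖tailSum a x₀ (k + 1)‖ * r ^ k * r = ‖tailSum a x₀ (k + 1)‖ * r ^ (k + 1) := by ring
    _ ≤ C := norm_tailSum_mul_pow_le hr hx₀ fun j hj => hle j (by omega)
    _ < ‖a (N + 1)‖ * r ^ (N + 1) := hC
    _ = ‖tailSum a x₀ (N + 1)‖ * r ^ N * r := by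
        rw [norm_tailSum_eq_of_dominant hr ha hx₀ hC hle]; ring

theorem encard_zeros_le [IsUltrametricDist K] [CompleteSpace K] (hr : 0 < r) (N : ℕ)
    (a : ℕ → K) (ha : Tendsto (fun j => ‖a j‖ * r ^ j) atTop (𝓝 0))
    (hN : ∀ j, N < j → ‖a j‖ * r ^ j < ‖a N‖ * r ^ N) :
    {x : K | ‖x‖ ≤ r ∧ ∑' j, a j * x ^ j = 0}.encard ≤ N := by
  induction N generalizing a with
  | zero =>
    rw [Nat.cast_zero, nonpos_iff_eq_zero, Set.encard_eq_zero, Set.eq_empty_iff_forall_notMem]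
    rintro x₀ ⟨hx₀, hf⟩
    obtain ⟨C, hC, hle⟩ := exists_lt_forall_le_of_dominant hr.le ha hN
    have h := norm_tailSum_eq_of_dominant hr ha hx₀ hC hle
    rw [tailSum_zero, hf, norm_zero] at h
    have hC₀ : 0 ≤ C := (mul_nonneg (norm_nonneg _) (pow_nonneg hr.le 1)).trans (hle 1 one_pos)
    rw [← h, zero_mul] at hC
    exact hC.not_ge hC₀
  | succ N ih =>
    rcases Set.eq_empty_or_nonempty {x : K | ‖x‖ ≤ r ∧ ∑' j, a j * x ^ j = 0}
      with h | ⟨x₀, hx₀, hf⟩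
    · simp [h]
    have hzeros : {x : K | ‖x‖ ≤ r ∧ ∑' j, a j * x ^ j = 0} ⊆
        insert x₀ {x | ‖x‖ ≤ r ∧ ∑' k, tailSum a x₀ (k + 1) * x ^ k = 0} := by
      rintro x ⟨hx, hfx⟩
      rw [tsum_mul_pow_eq_add_sub_mul hr ha hx hx₀, hf, zero_add, mul_eq_zero, sub_eq_zero]
        at hfx
      exact hfx.imp id (⟨hx, ·⟩)
    have hquot := ih (fun k => tailSum a x₀ (k + 1))
      (tendsto_norm_shift_mul_pow hr (tendsto_norm_tailSum_mul_pow hr ha hx₀) 1)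
      (norm_tailSum_succ_mul_pow_lt hr ha hx₀ hN)
    calc _ ≤ _ := Set.encard_le_encard hzeros
      _ ≤ _ := Set.encard_insert_le _ _
      _ ≤ ((N + 1 : ℕ) : ℕ∞) := by push_cast; gcongr

end Strassmann

theorem stmt_19_general {K : Type*} [NormedField K] [CompleteSpace K]
    (h_na : ∀ x y : K, ‖x + y‖ ≤ max ‖x‖ ‖y‖)
    (r : ℝ) (hr : 0 < r) (a : ℕ → K)
    (h_decay : Tendsto (fun j => ‖a j‖ * r ^ j) atTop (nhds 0))
    (N : ℕ) (hN : ∀ j, N < j → ‖a j‖ * r ^ j < ‖a N‖ * r ^ N) :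
    {x : K | ‖x‖ ≤ r ∧ (∑' j : ℕ, a j * x ^ j) = 0}.Finite ∧
    {x : K | ‖x‖ ≤ r ∧ (∑' j : ℕ, a j * x ^ j) = 0}.ncard ≤ N := by
  have : IsUltrametricDist K := isUltrametricDist_of_forall_norm_add_le_max_norm h_na
  exact Set.encard_le_coe_iff_finite_ncard_le.1 (Strassmann.encard_zeros_le hr N a h_decay hN)

/-- Strassmann's theorem: over a complete nonarchimedean field `K`, if
`‖a_j‖ r^j → 0`, not all `a_j` are zero, and `N` satisfies
`‖a_j‖ r^j < ‖a_N‖ r^N` for all `j > N`, then `f(x) = ∑ a_j x^j` has at most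
`N` zeros in the closed ball `{x : ‖x‖ ≤ r}`. -/
theorem stmt_19 {K : Type*} [NormedField K] [CompleteSpace K]
    (h_na : ∀ x y : K, ‖x + y‖ ≤ max ‖x‖ ‖y‖)
    (r : ℝ) (hr : 0 < r) (a : ℕ → K)
    (h_ne : ∃ j, a j ≠ 0)
    (h_decay : Tendsto (fun j => ‖a j‖ * r ^ j) atTop (nhds 0))
    (N : ℕ) (hN : ∀ j, N < j → ‖a j‖ * r ^ j < ‖a N‖ * r ^ N) :
    {x : K | ‖x‖ ≤ r ∧ (∑' j : ℕ, a j * x ^ j) = 0}.Finite ∧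
    {x : K | ‖x‖ ≤ r ∧ (∑' j : ℕ, a j * x ^ j) = 0}.ncard ≤ N :=
  stmt_19_general h_na r hr a h_decay N hN
end
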